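/- arXiv:2207.12457 — 2 statements merged into one kernel-verified Lean document; each statement's English description precedes it below -/
import Mathlib

section
/- (Symmetry of ρ̃, Lemma 2(ii).) Let 1/2 ≤ p ≤ 1, let p₊, p₋ ≥ 0 with p₊ + p₋ = 1, let v₊, v₋ be unit vectors in ℝ³, let z = (0,0,1), and assume p₊·v₊ + p₋·v₋ = (2p−1)·z. Then for every unit vector λ in ℝ³, ρ̃(λ) = ρ̃(−λ), where ρ̃(λ) := (1/π)[ p₊·Θ(λ·v₊) + p₋·Θ(λ·v₋) − (2p−1)·Θ(λ·z) ]. -/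
open MeasureTheory
open scoped RealInnerProductSpace

/-- `Θ(z) = z` for `z ≥ 0` and `0` otherwise. -/
noncomputable def Theta (z : ℝ) : ℝ := if 0 ≤ z then z else 0

/-- The vector `z = (0,0,1)` in `ℝ³`. -/
noncomputable def zvec : EuclideanSpace ℝ (Fin 3) := EuclideanSpace.single 2 (1 : ℝ)

/-- The extra density `ρ̃(λ)`. -/
noncomputable def rhoTilde (p pP pM : ℝ) (vP vM lam : EuclideanSpace ℝ (Fin 3)) : ℝ :=
  (1 / Real.pi) *
    (pP * Theta ⟪lam, vP⟫ + pM * Theta ⟪lam, vM⟫ - (2 * p - 1) * Theta ⟪lam, zvec⟫)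

/-! Since `Θ(x) − Θ(−x) = x`, the difference `ρ̃(λ) − ρ̃(−λ)` is the linear function
`(1/π) ⟪λ, p₊ v₊ + p₋ v₋ − (2p − 1) z⟫` of `λ`, which the balance condition makes vanish. -/

theorem Theta_eq_max (x : ℝ) : Theta x = max x 0 := by
  rw [Theta, max_comm, max_def]

theorem Theta_sub_Theta_neg (x : ℝ) : Theta x - Theta (-x) = x := by
  simp only [Theta_eq_max, max_zero_sub_max_neg_zero_eq_self]

theorem rhoTilde_sub_rhoTilde_neg (p pP pM : ℝ) (vP vM lam : EuclideanSpace ℝ (Fin 3)) :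
    rhoTilde p pP pM vP vM lam - rhoTilde p pP pM vP vM (-lam) =
      (1 / Real.pi) * ⟪lam, pP • vP + pM • vM - (2 * p - 1) • zvec⟫ := by
  simp only [rhoTilde, inner_neg_left, inner_sub_right, inner_add_right, inner_smul_right]
  linear_combination (1 / Real.pi) * (pP * Theta_sub_Theta_neg ⟪lam, vP⟫ +
    pM * Theta_sub_Theta_neg ⟪lam, vM⟫ - (2 * p - 1) * Theta_sub_Theta_neg ⟪lam, zvec⟫)

theorem rhoTilde_symmetric_general
    (p pP pM : ℝ)
    (vP vM : EuclideanSpace ℝ (Fin 3))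
    (hcombo : pP • vP + pM • vM = (2 * p - 1) • zvec)
    (lam : EuclideanSpace ℝ (Fin 3)) :
    rhoTilde p pP pM vP vM lam = rhoTilde p pP pM vP vM (-lam) := by
  rw [← sub_eq_zero, rhoTilde_sub_rhoTilde_neg, hcombo, sub_self, inner_zero_right, mul_zero]

/-- Lemma 2(ii): symmetry of `ρ̃`, namely `ρ̃(λ) = ρ̃(−λ)`. -/
theorem rhoTilde_symmetric
    (p pP pM : ℝ) (hp : 1 / 2 ≤ p) (hp' : p ≤ 1)
    (hpP : 0 ≤ pP) (hpM : 0 ≤ pM) (hsum : pP + pM = 1)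
    (vP vM : EuclideanSpace ℝ (Fin 3)) (hvP : ‖vP‖ = 1) (hvM : ‖vM‖ = 1)
    (hcombo : pP • vP + pM • vM = (2 * p - 1) • zvec)
    (lam : EuclideanSpace ℝ (Fin 3)) (hlam : ‖lam‖ = 1) :
    rhoTilde p pP pM vP vM lam = rhoTilde p pP pM vP vM (-lam) :=
  rhoTilde_symmetric_general p pP pM vP vM hcombo lam
end

section
/- (First bound on ρ̃, Lemma 2(iv).) Let 1/2 ≤ p ≤ 1, let p₊, p₋ ≥ 0 with p₊ + p₋ = 1, let v₊, v₋ be unit vectors in ℝ³, let z = (0,0,1), and assume p₊·v₊ + p₋·v₋ = (2p−1)·z. Then for every unit vector λ in ℝ³, ρ̃(λ) ≤ (p₊/π)·|λ·v₊| and ρ̃(λ) ≤ (p₋/π)·|λ·v₋|, where ρ̃(λ) := (1/π)[ p₊·Θ(λ·v₊) + p₋·Θ(λ·v₋) − (2p−1)·Θ(λ·z) ]. -/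
open MeasureTheory
open scoped RealInnerProductSpace

/-!
Write `a = λ·v₊`, `b = λ·v₋`, `c = λ·z`. Pairing the constraint with `λ` gives
`p₊ a + p₋ b = (2p − 1) c`, and since `Θ` is positively homogeneous,
`π ρ̃(λ) = p₊ Θ(a) + p₋ Θ(b) − Θ(p₊ a + p₋ b)`. With `Θ(x) = (x + |x|)/2` the linear parts cancel,
leaving `(p₊|a| + p₋|b| − |p₊ a + p₋ b|)/2`, which the triangle inequality bounds by both
`p₊|a|` and `p₋|b|`.
-/

lemma Theta_eq_add_abs_div_two (x : ℝ) : Theta x = (x + |x|) / 2 := by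
  unfold Theta
  split_ifs with hx
  · rw [abs_of_nonneg hx]; ring
  · rw [abs_of_neg (not_le.mp hx)]; ring

lemma Theta_mul_of_nonneg {k : ℝ} (hk : 0 ≤ k) (x : ℝ) : Theta (k * x) = k * Theta x := by
  rw [Theta_eq_add_abs_div_two, Theta_eq_add_abs_div_two, abs_mul, abs_of_nonneg hk]
  ring

lemma mul_Theta_add_mul_Theta_sub_Theta_le {s t : ℝ} (hs : 0 ≤ s) (ht : 0 ≤ t) (a b : ℝ) :
    s * Theta a + t * Theta b - Theta (s * a + t * b) ≤ s * |a| := by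
  have htriangle : |t * b| ≤ |s * a + t * b| + |s * a| := by
    simpa using abs_sub (s * a + t * b) (s * a)
  rw [abs_mul, abs_mul, abs_of_nonneg hs, abs_of_nonneg ht] at htriangle
  simp only [Theta_eq_add_abs_div_two]
  linarith

lemma rhoTilde_eq_Theta_sub {p pP pM : ℝ} (hp : 1 / 2 ≤ p) {vP vM : EuclideanSpace ℝ (Fin 3)}
    (hcombo : pP • vP + pM • vM = (2 * p - 1) • zvec) (lam : EuclideanSpace ℝ (Fin 3)) :
    rhoTilde p pP pM vP vM lam = (1 / Real.pi) *
      (pP * Theta ⟪lam, vP⟫ + pM * Theta ⟪lam, vM⟫ - Theta (pP * ⟪lam, vP⟫ + pM * ⟪lam, vM⟫)) := by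
  have hpair : pP * ⟪lam, vP⟫ + pM * ⟪lam, vM⟫ = (2 * p - 1) * ⟪lam, zvec⟫ := by
    simpa only [inner_add_right, real_inner_smul_right] using congrArg (⟪lam, ·⟫) hcombo
  rw [rhoTilde, hpair, Theta_mul_of_nonneg (by linarith)]

theorem rhoTilde_first_bound_general
    (p pP pM : ℝ) (hp : 1 / 2 ≤ p)
    (hpP : 0 ≤ pP) (hpM : 0 ≤ pM)
    (vP vM : EuclideanSpace ℝ (Fin 3))
    (hcombo : pP • vP + pM • vM = (2 * p - 1) • zvec)
    (lam : EuclideanSpace ℝ (Fin 3)) :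
    rhoTilde p pP pM vP vM lam ≤ (pP / Real.pi) * |⟪lam, vP⟫| ∧
    rhoTilde p pP pM vP vM lam ≤ (pM / Real.pi) * |⟪lam, vM⟫| := by
  have hπ : 0 ≤ 1 / Real.pi := by positivity
  rw [rhoTilde_eq_Theta_sub hp hcombo]
  constructor
  · calc _ ≤ 1 / Real.pi * (pP * |⟪lam, vP⟫|) :=
          mul_le_mul_of_nonneg_left (mul_Theta_add_mul_Theta_sub_Theta_le hpP hpM _ _) hπ
      _ = _ := by ring
  · rw [add_comm (pP * Theta _), add_comm (pP * _)]
    calc _ ≤ 1 / Real.pi * (pM * |⟪lam, vM⟫|) :=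
          mul_le_mul_of_nonneg_left (mul_Theta_add_mul_Theta_sub_Theta_le hpM hpP _ _) hπ
      _ = _ := by ring

/-- Lemma 2(iv): first bound on `ρ̃`, namely `ρ̃(λ) ≤ (p₊/π)·|λ·v₊|` and
`ρ̃(λ) ≤ (p₋/π)·|λ·v₋|`. -/
theorem rhoTilde_first_bound
    (p pP pM : ℝ) (hp : 1 / 2 ≤ p) (hp' : p ≤ 1)
    (hpP : 0 ≤ pP) (hpM : 0 ≤ pM) (hsum : pP + pM = 1)
    (vP vM : EuclideanSpace ℝ (Fin 3)) (hvP : ‖vP‖ = 1) (hvM : ‖vM‖ = 1)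
    (hcombo : pP • vP + pM • vM = (2 * p - 1) • zvec)
    (lam : EuclideanSpace ℝ (Fin 3)) (hlam : ‖lam‖ = 1) :
    rhoTilde p pP pM vP vM lam ≤ (pP / Real.pi) * |⟪lam, vP⟫| ∧
    rhoTilde p pP pM vP vM lam ≤ (pM / Real.pi) * |⟪lam, vM⟫| :=
  rhoTilde_first_bound_general p pP pM hp hpP hpM vP vM hcombo lam
end
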